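/- (Theorem 1, safety part.) Let x, y, θ : ℝ → ℝ be differentiable on [0, ∞) and suppose that at every t ≥ 0 with r(t) ∈ (r_i, r_o), the closed-loop equations hold: ẋ(t) = v·cos θ(t), ẏ(t) = v·sin θ(t), θ̇(t) = v/d + v·k₁·Ω(v·ē_x(t)) + v·k₂·((r(t) − d)/r(t))·η(r(t) − d). If r(0) ∈ (r_i, r_o), then r_i < r(t) < r_o for all t ≥ 0. -/

import Mathlib

/-- Range r(t) = √((x(t) − x_T)² + (y(t) − y_T)²). -/
noncomputable def rng (x y : ℝ → ℝ) (xT yT : ℝ) (t : ℝ) : ℝ :=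
  Real.sqrt ((x t - xT) ^ 2 + (y t - yT) ^ 2)

/-- Transformed error ē_x(t) = (x(t) − x_T)·cos θ(t) + (y(t) − y_T)·sin θ(t). -/
noncomputable def ebx (x y θ : ℝ → ℝ) (xT yT : ℝ) (t : ℝ) : ℝ :=
  (x t - xT) * Real.cos (θ t) + (y t - yT) * Real.sin (θ t)

/-- Transformed error ē_y(t) = −(x(t) − x_T)·sin θ(t) + (y(t) − y_T)·cos θ(t) + d. -/
noncomputable def eby (x y θ : ℝ → ℝ) (xT yT d : ℝ) (t : ℝ) : ℝ :=
  -(x t - xT) * Real.sin (θ t) + (y t - yT) * Real.cos (θ t) + d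

/-- The asymmetric barrier Lyapunov function V_r. -/
noncomputable def Vr (δa δb e : ℝ) : ℝ :=
  if 0 < e then (1 / 2) * Real.log (δb ^ 2 / (δb ^ 2 - e ^ 2))
  else (1 / 2) * Real.log (δa ^ 2 / (δa ^ 2 - e ^ 2))

/-- η(e) = 1/(δ_b² − e²) for e > 0 and η(e) = 1/(δ_a² − e²) for e ≤ 0. -/
noncomputable def eta (δa δb e : ℝ) : ℝ :=
  if 0 < e then 1 / (δb ^ 2 - e ^ 2) else 1 / (δa ^ 2 - e ^ 2)

/-!
Along the closed loop the Lyapunov function `Vr (r - d) + ē_y / k₂` has derivative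
`-v ē_x / (d k₂) - (k₁ / k₂) (v ē_x) Ω (v ē_x)`: the `η`-term of the steering law exactly cancels
`d/dt Vr (r - d)`. Since `s Ω s ≥ 0` and `|ē_x|, |ē_y - d| ≤ r < r_o`, this keeps `Vr (r - d)` below a
bound depending only on the time horizon, as long as `r` stays in `(r_i, r_o)`. As `Vr` blows up at
both ends of the interval, `r` is then confined to a closed subinterval, so a first exit time
cannot exist.
-/

open Set Real

theorem forall_mem_of_confined {X : Type*} [TopologicalSpace X] {γ : ℝ → X} {U : Set X}
    (hU : IsOpen U) (hγ : ContinuousOn γ (Ici 0)) (h0 : γ 0 ∈ U)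
    (hK : ∀ T ≥ (0 : ℝ), ∃ K, IsClosed K ∧ K ⊆ U ∧
      ∀ s ∈ Icc 0 T, MapsTo γ (Icc 0 s) U → γ s ∈ K) :
    ∀ t ≥ (0 : ℝ), γ t ∈ U := by
  intro T hT
  obtain ⟨K, hKc, hKU, hK⟩ := hK T hT
  by_contra hout
  set S := Icc 0 T ∩ γ ⁻¹' Uᶜ
  have hSc : IsClosed S :=
    (hγ.mono Icc_subset_Ici_self).preimage_isClosed_of_isClosed isClosed_Icc hU.isClosed_compl
  have hSbdd : BddBelow S := ⟨0, fun s hs => hs.1.1⟩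
  set τ := sInf S
  have hτ : τ ∈ S := hSc.csInf_mem ⟨T, ⟨hT, le_rfl⟩, hout⟩ hSbdd
  have hτpos : 0 < τ := hτ.1.1.lt_of_ne fun h => hτ.2 (h ▸ h0)
  have hbefore : MapsTo γ (Ico 0 τ) K := fun s hs =>
    hK s ⟨hs.1, hs.2.le.trans hτ.1.2⟩ fun u hu => by
      by_contra hu'
      exact (csInf_le hSbdd ⟨⟨hu.1, hu.2.trans (hs.2.le.trans hτ.1.2)⟩, hu'⟩).not_gt
        (hu.2.trans_lt hs.2)
  have hτcl : γ τ ∈ closure (γ '' Ico 0 τ) :=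
    ((hγ τ hτ.1.1).mono Ico_subset_Ici_self).mem_closure_image
      (by rw [closure_Ico hτpos.ne]; exact right_mem_Icc.2 hτ.1.1)
  exact hτ.2 (hKU (closure_minimal hbefore.image_subset hKc hτcl))

theorem hasDerivAt_half_log_div {δ e : ℝ} (he : e ^ 2 < δ ^ 2) :
    HasDerivAt (fun s => 1 / 2 * log (δ ^ 2 / (δ ^ 2 - s ^ 2))) (e / (δ ^ 2 - e ^ 2)) e := by
  have hpos : 0 < δ ^ 2 - e ^ 2 := sub_pos.2 he
  have hδ : δ ≠ 0 := by rintro rfl; nlinarith [sq_nonneg e]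
  have hq := (hasDerivAt_const e (δ ^ 2)).fun_div
    ((hasDerivAt_pow 2 e).const_sub (δ ^ 2)) hpos.ne'
  refine ((hq.log (by positivity)).const_mul (1 / 2)).congr_deriv ?_
  field_simp
  ring

theorem hasDerivAt_Vr {δa δb e : ℝ} (he : e ∈ Ioo (-δa) δb) :
    HasDerivAt (Vr δa δb) (e * eta δa δb e) e := by
  obtain ⟨hae, heb⟩ := he
  rcases lt_trichotomy e 0 with hneg | rfl | hpos
  · have hrate : e * eta δa δb e = e / (δa ^ 2 - e ^ 2) := by
      rw [eta, if_neg hneg.not_gt, mul_one_div]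
    rw [hrate]
    refine (hasDerivAt_half_log_div (by nlinarith)).congr_of_eventuallyEq ?_
    filter_upwards [Iio_mem_nhds hneg] with s hs using if_neg hs.not_gt
  · have hL : ∀ δ : ℝ, 0 < δ →
        HasDerivAt (fun s => 1 / 2 * log (δ ^ 2 / (δ ^ 2 - s ^ 2))) 0 0 := fun δ hδ => by
      simpa using hasDerivAt_half_log_div (e := 0) (by simpa using pow_pos hδ 2)
    have hleft : HasDerivWithinAt (Vr δa δb) 0 (Iic 0) 0 :=
      (hL δa (neg_lt_zero.1 hae)).hasDerivWithinAt.congr (fun s hs => if_neg hs.not_gt)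
        (if_neg (lt_irrefl 0))
    have hright : HasDerivWithinAt (Vr δa δb) 0 (Ioi 0) 0 :=
      (hL δb heb).hasDerivWithinAt.congr (fun s hs => if_pos hs) (by simp [Vr])
    rw [zero_mul, ← hasDerivWithinAt_univ, ← Iic_union_Ici]
    exact hleft.union (hasDerivWithinAt_Ioi_iff_Ici.1 hright)
  · have hrate : e * eta δa δb e = e / (δb ^ 2 - e ^ 2) := by
      rw [eta, if_pos hpos, mul_one_div]
    rw [hrate]
    refine (hasDerivAt_half_log_div (by nlinarith)).congr_of_eventuallyEq ?_
    filter_upwards [Ioi_mem_nhds hpos] with s hs using if_pos hs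

theorem abs_le_of_half_log_div_le {δ e C : ℝ} (hδ : 0 < δ) (he : e ^ 2 < δ ^ 2)
    (h : 1 / 2 * log (δ ^ 2 / (δ ^ 2 - e ^ 2)) ≤ C) :
    |e| ≤ √(1 - exp (-(2 * C))) * δ := by
  have hlog : -(2 * C) ≤ log ((δ ^ 2 - e ^ 2) / δ ^ 2) := by
    rw [← inv_div, log_inv]
    linarith
  have hexp := (le_log_iff_exp_le (div_pos (sub_pos.2 he) (by positivity))).1 hlog
  rw [le_div_iff₀ (by positivity)] at hexp
  have hsq : e ^ 2 ≤ (1 - exp (-(2 * C))) * δ ^ 2 := by linarith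
  calc |e| = √(e ^ 2) := (sqrt_sq_eq_abs e).symm
    _ ≤ √((1 - exp (-(2 * C))) * δ ^ 2) := sqrt_le_sqrt hsq
    _ = √(1 - exp (-(2 * C))) * δ := by rw [sqrt_mul' _ (sq_nonneg δ), sqrt_sq hδ.le]

theorem exists_isClosed_subset_of_Vr_le {δa δb : ℝ} (ha : 0 < δa) (hb : 0 < δb) (C : ℝ) :
    ∃ K, IsClosed K ∧ K ⊆ Ioo (-δa) δb ∧ ∀ e ∈ Ioo (-δa) δb, Vr δa δb e ≤ C → e ∈ K := by
  set ρ := √(1 - exp (-(2 * C)))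
  have hρ : ρ < 1 := (sqrt_lt' one_pos).2 (by linarith [exp_pos (-(2 * C))])
  refine ⟨Icc (-(ρ * δa)) (ρ * δb), isClosed_Icc, ?_, fun e ⟨hae, heb⟩ hV => ?_⟩
  · exact Icc_subset_Ioo (by nlinarith) (by nlinarith)
  have hρ0 : 0 ≤ ρ := sqrt_nonneg _
  by_cases hpos : 0 < e
  · rw [Vr, if_pos hpos] at hV
    have := abs_le_of_half_log_div_le hb (by nlinarith) hV
    exact ⟨by nlinarith, (abs_le.1 this).2⟩
  · rw [Vr, if_neg hpos] at hV
    have := abs_le_of_half_log_div_le ha (by nlinarith) hV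
    exact ⟨(abs_le.1 this).1, by nlinarith⟩

section Kinematics

variable {x y θ : ℝ → ℝ} {xT yT d v t : ℝ}

theorem ebx_sq_add_eby_sub_sq :
    ebx x y θ xT yT t ^ 2 + (eby x y θ xT yT d t - d) ^ 2 = rng x y xT yT t ^ 2 := by
  rw [rng, sq_sqrt (by positivity), ebx, eby]
  linear_combination ((x t - xT) ^ 2 + (y t - yT) ^ 2) * sin_sq_add_cos_sq (θ t)

theorem abs_ebx_le_rng : |ebx x y θ xT yT t| ≤ rng x y xT yT t := by
  have := @ebx_sq_add_eby_sub_sq x y θ xT yT 0 t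
  exact abs_le_of_sq_le_sq (by nlinarith) (sqrt_nonneg _)

theorem abs_eby_sub_le_rng : |eby x y θ xT yT d t - d| ≤ rng x y xT yT t := by
  have := @ebx_sq_add_eby_sub_sq x y θ xT yT d t
  exact abs_le_of_sq_le_sq (by nlinarith) (sqrt_nonneg _)

theorem continuousAt_rng (hx : ContinuousAt x t) (hy : ContinuousAt y t) :
    ContinuousAt (rng x y xT yT) t := by
  unfold rng
  fun_prop

theorem hasDerivAt_rng (hx : HasDerivAt x (v * cos (θ t)) t) (hy : HasDerivAt y (v * sin (θ t)) t)
    (hr : rng x y xT yT t ≠ 0) :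
    HasDerivAt (rng x y xT yT) (v * ebx x y θ xT yT t / rng x y xT yT t) t := by
  have hq := ((hx.sub_const xT).fun_pow 2).fun_add ((hy.sub_const yT).fun_pow 2)
  refine (hq.sqrt fun h => hr (by rw [rng, h, sqrt_zero])).congr_deriv ?_
  change _ / (2 * rng x y xT yT t) = _
  rw [ebx]
  field_simp
  ring

theorem hasDerivAt_eby {ω : ℝ} (hx : HasDerivAt x (v * cos (θ t)) t)
    (hy : HasDerivAt y (v * sin (θ t)) t) (hθ : HasDerivAt θ ω t) :
    HasDerivAt (eby x y θ xT yT d) (-(ω * ebx x y θ xT yT t)) t := by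
  have hu := ((hx.sub_const xT).fun_neg.fun_mul hθ.sin).fun_add
    ((hy.sub_const yT).fun_mul hθ.cos)
  refine (hu.add_const d).congr_deriv ?_
  rw [ebx]
  ring

end Kinematics

section ClosedLoop

variable {x y θ Ω : ℝ → ℝ} {v d k1 k2 ri ro xT yT t : ℝ}

def ClosedLoopAt (x y θ Ω : ℝ → ℝ) (v d k1 k2 ri ro xT yT t : ℝ) : Prop :=
  HasDerivAt x (v * cos (θ t)) t ∧ HasDerivAt y (v * sin (θ t)) t ∧
    HasDerivAt θ (v / d + v * k1 * Ω (v * ebx x y θ xT yT t) +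
      v * k2 * ((rng x y xT yT t - d) / rng x y xT yT t) *
        eta (d - ri) (ro - d) (rng x y xT yT t - d)) t

noncomputable def lyap (x y θ : ℝ → ℝ) (d k2 ri ro xT yT t : ℝ) : ℝ :=
  Vr (d - ri) (ro - d) (rng x y xT yT t - d) + eby x y θ xT yT d t / k2

noncomputable def lyapRate (Ω : ℝ → ℝ) (d k1 k2 w : ℝ) : ℝ :=
  -w / (d * k2) - k1 / k2 * (w * Ω w)

theorem ClosedLoopAt.hasDerivAt_lyap (h : ClosedLoopAt x y θ Ω v d k1 k2 ri ro xT yT t)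
    (hr : rng x y xT yT t ∈ Ioo ri ro) (hri : 0 < ri) (hd : d ≠ 0) (hk2 : k2 ≠ 0) :
    HasDerivAt (lyap x y θ d k2 ri ro xT yT) (lyapRate Ω d k1 k2 (v * ebx x y θ xT yT t)) t := by
  obtain ⟨hx, hy, hθ⟩ := h
  have hr0 : rng x y xT yT t ≠ 0 := (hri.trans hr.1).ne'
  have he : rng x y xT yT t - d ∈ Ioo (-(d - ri)) (ro - d) :=
    ⟨by linarith [hr.1], by linarith [hr.2]⟩
  have hV := (hasDerivAt_Vr he).comp t ((hasDerivAt_rng hx hy hr0).sub_const d)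
  refine (hV.fun_add ((hasDerivAt_eby hx hy hθ).div_const k2)).congr_deriv ?_
  rw [lyapRate]
  field_simp
  ring

theorem lyapRate_le (hΩ : ∀ s, s ≠ 0 → 0 < s * Ω s) (hd : 0 < d) (hk1 : 0 ≤ k1) (hk2 : 0 < k2)
    {w R : ℝ} (hw : |w| ≤ R) : lyapRate Ω d k1 k2 w ≤ R / (d * k2) := by
  have hΩw : 0 ≤ w * Ω w := by
    rcases eq_or_ne w 0 with rfl | hw0
    · rw [zero_mul]
    · exact (hΩ w hw0).le
  have : -w / (d * k2) ≤ R / (d * k2) :=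
    div_le_div_of_nonneg_right ((neg_le_abs w).trans hw) (by positivity)
  rw [lyapRate]
  nlinarith [div_nonneg hk1 hk2.le]

theorem exists_Vr_rng_le (hloop : ∀ t ≥ (0 : ℝ), rng x y xT yT t ∈ Ioo ri ro →
      ClosedLoopAt x y θ Ω v d k1 k2 ri ro xT yT t)
    (hΩ : ∀ s, s ≠ 0 → 0 < s * Ω s) (hri : 0 < ri) (hrid : ri < d) (hdro : d < ro)
    (hk1 : 0 ≤ k1) (hk2 : 0 < k2) (T : ℝ) :
    ∃ C, ∀ s ∈ Icc 0 T, MapsTo (rng x y xT yT) (Icc 0 s) (Ioo ri ro) →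
      Vr (d - ri) (ro - d) (rng x y xT yT s - d) ≤ C := by
  have hd : 0 < d := hri.trans hrid
  set M := |v| * ro / (d * k2)
  have hM : 0 ≤ M := div_nonneg (mul_nonneg (abs_nonneg v) (by linarith)) (by positivity)
  refine ⟨lyap x y θ d k2 ri ro xT yT 0 + M * T + (ro - d) / k2, fun s hs hin => ?_⟩
  have hderiv : ∀ u ∈ Icc 0 s, HasDerivAt (lyap x y θ d k2 ri ro xT yT)
      (lyapRate Ω d k1 k2 (v * ebx x y θ xT yT u)) u := fun u hu =>
    (hloop u hu.1 (hin hu)).hasDerivAt_lyap (hin hu) hri hd.ne' hk2.ne'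
  have hrate : ∀ u ∈ Icc 0 s, lyapRate Ω d k1 k2 (v * ebx x y θ xT yT u) ≤ M := fun u hu =>
    lyapRate_le hΩ hd hk1 hk2 (by
      rw [abs_mul]
      exact mul_le_mul_of_nonneg_left (abs_ebx_le_rng.trans (hin hu).2.le) (abs_nonneg v))
  have hlyap := (convex_Icc 0 s).image_sub_le_mul_sub_of_deriv_le
    (fun u hu => (hderiv u hu).continuousAt.continuousWithinAt)
    (fun u hu => (hderiv u (interior_subset hu)).differentiableAt.differentiableWithinAt)
    (fun u hu => (hderiv u (interior_subset hu)).deriv ▸ hrate u (interior_subset hu))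
    0 (left_mem_Icc.2 hs.1) s (right_mem_Icc.2 hs.1) hs.1
  have heby : d - ro ≤ eby x y θ xT yT d s := by
    linarith [(abs_le.1 (@abs_eby_sub_le_rng x y θ xT yT d s)).1, (hin (right_mem_Icc.2 hs.1)).2]
  have hMT : M * s ≤ M * T := mul_le_mul_of_nonneg_left hs.2 hM
  have hk2eby : -eby x y θ xT yT d s / k2 ≤ (ro - d) / k2 :=
    div_le_div_of_nonneg_right (by linarith) hk2.le
  rw [lyap] at hlyap
  linarith [neg_div k2 (eby x y θ xT yT d s)]

end ClosedLoop

theorem theorem1_safety_general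
    (x y θ : ℝ → ℝ) (Ω : ℝ → ℝ) (v d k1 k2 ri ro xT yT : ℝ)
    (hΩpos : ∀ s : ℝ, s ≠ 0 → 0 < s * Ω s)
    (hri : 0 < ri) (hrid : ri < d) (hdro : d < ro)
    (hk1 : 0 < k1) (hk2 : 0 < k2)
    (hxdiff : ∀ t ≥ (0 : ℝ), DifferentiableAt ℝ x t)
    (hydiff : ∀ t ≥ (0 : ℝ), DifferentiableAt ℝ y t)
    (hclosedloop : ∀ t ≥ (0 : ℝ), rng x y xT yT t ∈ Set.Ioo ri ro →
      HasDerivAt x (v * Real.cos (θ t)) t ∧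
      HasDerivAt y (v * Real.sin (θ t)) t ∧
      HasDerivAt θ (v / d + v * k1 * Ω (v * ebx x y θ xT yT t) +
        v * k2 * ((rng x y xT yT t - d) / rng x y xT yT t) *
          eta (d - ri) (ro - d) (rng x y xT yT t - d)) t)
    (hr0 : rng x y xT yT 0 ∈ Set.Ioo ri ro) :
    ∀ t ≥ (0 : ℝ), ri < rng x y xT yT t ∧ rng x y xT yT t < ro := by
  have hcont : ContinuousOn (rng x y xT yT) (Ici 0) := fun t ht =>
    (continuousAt_rng (hxdiff t ht).continuousAt (hydiff t ht).continuousAt).continuousWithinAt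
  refine forall_mem_of_confined isOpen_Ioo hcont hr0 fun T _ => ?_
  obtain ⟨C, hC⟩ := exists_Vr_rng_le hclosedloop hΩpos hri hrid hdro hk1.le hk2 T
  obtain ⟨K, hKc, hKU, hK⟩ := exists_isClosed_subset_of_Vr_le (sub_pos.2 hrid) (sub_pos.2 hdro) C
  refine ⟨(· - d) ⁻¹' K, hKc.preimage (continuous_sub_right d), fun r hr => ?_,
    fun s hs hin => hK _ ?_ (hC s hs hin)⟩
  · obtain ⟨h1, h2⟩ := hKU hr
    constructor <;> linarith
  · obtain ⟨h1, h2⟩ := hin (right_mem_Icc.2 hs.1)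
    constructor <;> linarith

/-- Theorem 1, safety part: Under the closed-loop dynamics with the range
and range-rate based controller, if r(0) ∈ (r_i, r_o), then r_i < r(t) < r_o for all t ≥ 0. -/
theorem theorem1_safety
    (x y θ : ℝ → ℝ) (Ω : ℝ → ℝ) (v d k1 k2 ri ro xT yT : ℝ)
    (hΩcont : Continuous Ω) (hΩ0 : Ω 0 = 0) (hΩpos : ∀ s : ℝ, s ≠ 0 → 0 < s * Ω s)
    (hv : v ≠ 0) (hri : 0 < ri) (hrid : ri < d) (hdro : d < ro)
    (hk1 : 0 < k1) (hk2 : 0 < k2)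
    (hxdiff : ∀ t ≥ (0 : ℝ), DifferentiableAt ℝ x t)
    (hydiff : ∀ t ≥ (0 : ℝ), DifferentiableAt ℝ y t)
    (hθdiff : ∀ t ≥ (0 : ℝ), DifferentiableAt ℝ θ t)
    (hclosedloop : ∀ t ≥ (0 : ℝ), rng x y xT yT t ∈ Set.Ioo ri ro →
      HasDerivAt x (v * Real.cos (θ t)) t ∧
      HasDerivAt y (v * Real.sin (θ t)) t ∧
      HasDerivAt θ (v / d + v * k1 * Ω (v * ebx x y θ xT yT t) +
        v * k2 * ((rng x y xT yT t - d) / rng x y xT yT t) *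
          eta (d - ri) (ro - d) (rng x y xT yT t - d)) t)
    (hr0 : rng x y xT yT 0 ∈ Set.Ioo ri ro) :
    ∀ t ≥ (0 : ℝ), ri < rng x y xT yT t ∧ rng x y xT yT t < ro :=
  theorem1_safety_general x y θ Ω v d k1 k2 ri ro xT yT hΩpos hri hrid hdro hk1 hk2 hxdiff hydiff
    hclosedloop hr0
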